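/- Let J ≥ 1, let μ₁, …, μ_J be strictly negative real numbers, set M = max_i {μ_i²/2} and G(c) = Σ_{i=1}^J Φ(μ_i/2 + c/μ_i). Let q ∈ (0,1) satisfy q ≤ G(M)/J, and let c be the unique real number with G(c) = Jq. Then c ≥ M, and the Spjøtvoll weights w_i = Φ(μ_i/2 + c/μ_i)/q are monotone increasing in |μ_i|: if |μ_i| ≤ |μ_j| then w_i ≤ w_j. -/

import Mathlib

/-!
The map `c ↦ μ/2 + c/μ` is strictly decreasing for `μ < 0`, so `G` is strictly decreasing and
`G(c) = Jq ≤ G(M)` forces `c ≥ M`. For `μⱼ ≤ μᵢ < 0` one has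
`(μⱼ/2 + c/μⱼ) - (μᵢ/2 + c/μᵢ) = (μᵢ - μⱼ) (c/(μᵢμⱼ) - 1/2)`, which is nonnegative as soon as
`μᵢμⱼ ≤ μⱼ² ≤ 2M ≤ 2c`; monotonicity of `Φ` then orders the weights.
-/

open MeasureTheory

/-- The standard normal cumulative distribution function. -/
noncomputable def Phi (x : ℝ) : ℝ :=
  ∫ t in Set.Iic x, (Real.sqrt (2 * Real.pi))⁻¹ * Real.exp (-t ^ 2 / 2)

theorem strictMono_setIntegral_Iic {f : ℝ → ℝ} (hf : Integrable f) (hpos : ∀ t, 0 < f t) :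
    StrictMono fun x => ∫ t in Set.Iic x, f t := by
  intro x y hxy
  have hdisj : Disjoint (Set.Iic x) (Set.Ioc x y) :=
    Set.disjoint_left.2 fun _ hx hy => (not_lt.2 hx) hy.1
  have hsplit : ∫ t in Set.Iic y, f t = (∫ t in Set.Iic x, f t) + ∫ t in Set.Ioc x y, f t := by
    rw [← Set.Iic_union_Ioc_eq_Iic hxy.le]
    exact setIntegral_union hdisj measurableSet_Ioc hf.integrableOn hf.integrableOn
  have hIoc : 0 < ∫ t in Set.Ioc x y, f t := by
    rw [← intervalIntegral.integral_of_le hxy.le]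
    exact intervalIntegral.intervalIntegral_pos_of_pos_on hf.intervalIntegrable
      (fun t _ => hpos t) hxy
  simp only [hsplit]
  linarith

theorem integrable_gaussianPDF_std :
    Integrable fun t : ℝ => (Real.sqrt (2 * Real.pi))⁻¹ * Real.exp (-t ^ 2 / 2) := by
  have h : Integrable fun t : ℝ => Real.exp (-(1 / 2) * t ^ 2) :=
    integrable_exp_neg_mul_sq (by norm_num)
  refine (h.congr (Filter.Eventually.of_forall fun t => ?_)).const_mul _
  ring_nf

theorem Phi_strictMono : StrictMono Phi :=
  strictMono_setIntegral_Iic integrable_gaussianPDF_std fun _ => by positivity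

theorem strictAnti_half_add_div {μ : ℝ} (hμ : μ < 0) : StrictAnti fun c : ℝ => μ / 2 + c / μ :=
  fun _ _ h => add_lt_add_right (div_lt_div_of_neg_of_lt hμ h) _

theorem strictAnti_sum_Phi_half_add_div {ι : Type*} [Fintype ι] [Nonempty ι] {μ : ι → ℝ}
    (hμ : ∀ i, μ i < 0) : StrictAnti fun c : ℝ => ∑ i, Phi (μ i / 2 + c / μ i) :=
  fun _ _ h => Finset.sum_lt_sum_of_nonempty Finset.univ_nonempty fun i _ =>
    Phi_strictMono (strictAnti_half_add_div (hμ i) h)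

theorem half_add_div_le_half_add_div {a b c : ℝ} (hba : b ≤ a) (ha : a < 0)
    (hb2 : b ^ 2 ≤ 2 * c) : a / 2 + c / a ≤ b / 2 + c / b := by
  have hb : b < 0 := hba.trans_lt ha
  have hab : 0 < a * b := mul_pos_of_neg_of_neg ha hb
  have hdiff : (b / 2 + c / b) - (a / 2 + c / a) = (a - b) * (c / (a * b) - 1 / 2) := by
    field_simp [ha.ne, hb.ne]
    ring
  have hfactor : 1 / 2 ≤ c / (a * b) := by
    rw [le_div_iff₀ hab]
    nlinarith
  rw [← sub_nonneg, hdiff]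
  exact mul_nonneg (sub_nonneg.2 hba) (sub_nonneg.2 hfactor)

theorem stmt_10_general (J : ℕ) (hJ : 1 ≤ J) (μ : Fin J → ℝ) (hμ : ∀ i, μ i < 0)
    (M : ℝ) (hM_le : ∀ i, (μ i) ^ 2 / 2 ≤ M)
    (q : ℝ) (hq : q ∈ Set.Ioo (0 : ℝ) 1)
    (hq_small : q ≤ (∑ i, Phi (μ i / 2 + M / μ i)) / J)
    (c : ℝ) (hc : ∑ i, Phi (μ i / 2 + c / μ i) = J * q) :
    M ≤ c ∧
    ∀ i j, |μ i| ≤ |μ j| →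
      Phi (μ i / 2 + c / μ i) / q ≤ Phi (μ j / 2 + c / μ j) / q := by
  have : NeZero J := ⟨by omega⟩
  have hJq : ∑ i, Phi (μ i / 2 + c / μ i) ≤ ∑ i, Phi (μ i / 2 + M / μ i) := by
    rw [hc, mul_comm]
    exact (le_div_iff₀ (by exact_mod_cast hJ)).1 hq_small
  have hMc : M ≤ c := (strictAnti_sum_Phi_half_add_div hμ).le_iff_ge.1 hJq
  refine ⟨hMc, fun i j hij => ?_⟩
  rw [abs_of_neg (hμ i), abs_of_neg (hμ j), neg_le_neg_iff] at hij
  have hμj : μ j ^ 2 ≤ 2 * c := by linarith [hM_le j]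
  have hq_pos := hq.1
  gcongr
  exact Phi_strictMono.monotone (half_add_div_le_half_add_div hij (hμ i) hμj)

/-- Monotonicity of one-sided Spjøtvoll weights for small `q`: with `M = max μᵢ²/2` and
`G(c) = Σᵢ Φ(μᵢ/2 + c/μᵢ)`, if `q ≤ G(M)/J` and `c` solves `G(c) = Jq`, then `c ≥ M`
and the weights `wᵢ = Φ(μᵢ/2 + c/μᵢ)/q` are monotone increasing in `|μᵢ|`. -/
theorem stmt_10 (J : ℕ) (hJ : 1 ≤ J) (μ : Fin J → ℝ) (hμ : ∀ i, μ i < 0)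
    (M : ℝ) (hM_le : ∀ i, (μ i) ^ 2 / 2 ≤ M) (hM_eq : ∃ i, M = (μ i) ^ 2 / 2)
    (q : ℝ) (hq : q ∈ Set.Ioo (0 : ℝ) 1)
    (hq_small : q ≤ (∑ i, Phi (μ i / 2 + M / μ i)) / J)
    (c : ℝ) (hc : ∑ i, Phi (μ i / 2 + c / μ i) = J * q) :
    M ≤ c ∧
    ∀ i j, |μ i| ≤ |μ j| →
      Phi (μ i / 2 + c / μ i) / q ≤ Phi (μ j / 2 + c / μ j) / q :=
  stmt_10_general J hJ μ hμ M hM_le q hq hq_small c hc
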